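/- Let $\{Q_j\}_{j\in\Gamma}$ be a pairwise disjoint family of dyadic cubes in $\mathbb{R}^n$, and for $m\ge 0$ let $i_m=\{j\in\Gamma : \text{there exist exactly } m \text{ indices } s\in\Gamma \text{ with } Q_j^+\subsetneq Q_s^+\}$. Then for any fixed $m_0$ and $j_0\in i_{m_0}$, $\sum_{m>m_0}\sum_{j\in i_m,\, Q_j^+\subsetneq Q_{j_0}^+} |Q_j| \le 2^n |Q_{j_0}|$. -/
import Mathlib


open MeasureTheory Set ENNReal

noncomputable section

/-- The half-open cube `∏ᵢ [aᵢ, aᵢ + h)` in `ℝⁿ`. -/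
def cube {n : ℕ} (a : Fin n → ℝ) (h : ℝ) : Set (Fin n → ℝ) :=
  Set.univ.pi fun i => Set.Ico (a i) (a i + h)

/-- The forward adjacent cube `Q⁺ = ∏ᵢ [aᵢ + h, aᵢ + 2h)`. -/
def cubePlus {n : ℕ} (a : Fin n → ℝ) (h : ℝ) : Set (Fin n → ℝ) :=
  Set.univ.pi fun i => Set.Ico (a i + h) (a i + 2 * h)

/-- The dyadic cube with corner `m * 2^k` and side `2^k`. -/
def dyCube {n : ℕ} (k : ℤ) (m : Fin n → ℤ) : Set (Fin n → ℝ) :=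
  cube (fun i => (m i : ℝ) * 2 ^ k) (2 ^ k)

/-- The forward adjacent cube of a dyadic cube. -/
def dyCubePlus {n : ℕ} (k : ℤ) (m : Fin n → ℤ) : Set (Fin n → ℝ) :=
  cubePlus (fun i => (m i : ℝ) * 2 ^ k) (2 ^ k)

/-- The dyadic one-sided maximal function of the characteristic function of `E`:
`M^{+,d}(χ_E)(x) = sup { |E ∩ Q⁺| / |Q| : Q dyadic cube containing x }`. -/
def Mplusd {n : ℕ} (E : Set (Fin n → ℝ)) (x : Fin n → ℝ) : ℝ≥0∞ :=
  ⨆ (k : ℤ) (m : Fin n → ℤ) (_ : x ∈ dyCube k m),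
    volume (E ∩ dyCubePlus k m) / volume (dyCube k m)

lemma volume_cube {n : ℕ} (a : Fin n → ℝ) (h : ℝ) :
    volume (cube a h) = ENNReal.ofReal h ^ n := by
  simp [cube, volume_pi_pi, Real.volume_Ico]

lemma measurableSet_cube {n : ℕ} (a : Fin n → ℝ) (h : ℝ) :
    MeasurableSet (cube a h) :=
  MeasurableSet.univ_pi fun i => measurableSet_Ico

lemma cube_subset_of_cubePlus_subset {n : ℕ} (a a' : Fin n → ℝ) (h h' : ℝ)
    (hh : 0 < h) (hsub : cubePlus a h ⊆ cubePlus a' h') :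
    cube a h ⊆ cube a' (2 * h') := by
  have hne : ∀ i, (Set.Ico (a i + h) (a i + 2 * h)).Nonempty := by
    intro i; exact ⟨a i + h, le_refl _, by linarith⟩
  have hcoord : ∀ i, a' i + h' ≤ a i + h ∧ a i + 2 * h ≤ a' i + 2 * h' := by
    intro i
    have : Set.Ico (a i + h) (a i + 2 * h) ⊆ Set.Ico (a' i + h') (a' i + 2 * h') := by
      intro x hx
      classical
      have hy : (fun j => if j = i then x else a j + h) ∈ cubePlus a h := by
        intro j _
        by_cases hji : j = i
        · subst hji; simpa using hx
        · simp only [if_neg hji]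
          exact ⟨le_refl _, by linarith⟩
      have := hsub hy i (mem_univ i)
      simpa using this
    have hlt : a i + h < a i + 2 * h := by linarith
    exact (Set.Ico_subset_Ico_iff hlt).mp this
  intro x hx i _
  have hxi := hx i (mem_univ i)
  obtain ⟨h1, h2⟩ := hcoord i
  exact ⟨by cases hxi with | intro l r => linarith, by cases hxi with | intro l r => linarith⟩

/-- For a pairwise disjoint family of dyadic cubes `{Q_j}` and
`i_m = {j : exactly m indices s satisfy Q_j⁺ ⊊ Q_s⁺}`, for any `m₀` and `j₀ ∈ i_{m₀}`,
the cubes `Q_j` with `j ∈ i_m` for some `m > m₀` and `Q_j⁺ ⊊ Q_{j₀}⁺` have total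
measure at most `2^n |Q_{j₀}|`. -/
theorem sum_volume_le_of_nested {n : ℕ} {ι : Type*} [Countable ι]
    (k : ι → ℤ) (a : ι → Fin n → ℤ)
    (hdisj : Pairwise fun i j => Disjoint (dyCube (k i) (a i)) (dyCube (k j) (a j)))
    (im : ℕ → Set ι)
    (him : ∀ M j, j ∈ im M ↔
      ({s : ι | dyCubePlus (k j) (a j) ⊂ dyCubePlus (k s) (a s)}.Finite ∧
        {s : ι | dyCubePlus (k j) (a j) ⊂ dyCubePlus (k s) (a s)}.ncard = M))
    (m₀ : ℕ) (j₀ : ι) (hj₀ : j₀ ∈ im m₀) :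
    ∑' j : {j : ι // (∃ M, m₀ < M ∧ j ∈ im M) ∧
        dyCubePlus (k j) (a j) ⊂ dyCubePlus (k j₀) (a j₀)},
      volume (dyCube (k j) (a j))
      ≤ 2 ^ n * volume (dyCube (k j₀) (a j₀)) := by
  set big : Set (Fin n → ℝ) :=
    cube (fun i => (a j₀ i : ℝ) * 2 ^ (k j₀)) (2 * 2 ^ (k j₀)) with hbig
  have hsub : ∀ j : {j : ι // (∃ M, m₀ < M ∧ j ∈ im M) ∧
      dyCubePlus (k j) (a j) ⊂ dyCubePlus (k j₀) (a j₀)},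
      dyCube (k j.1) (a j.1) ⊆ big := by
    intro j
    exact cube_subset_of_cubePlus_subset _ _ _ _ (by positivity) j.2.2.subset
  calc ∑' j : {j : ι // (∃ M, m₀ < M ∧ j ∈ im M) ∧
        dyCubePlus (k j) (a j) ⊂ dyCubePlus (k j₀) (a j₀)},
      volume (dyCube (k j) (a j))
      = volume (⋃ j : {j : ι // (∃ M, m₀ < M ∧ j ∈ im M) ∧
        dyCubePlus (k j) (a j) ⊂ dyCubePlus (k j₀) (a j₀)}, dyCube (k j.1) (a j.1)) := by
        refine (measure_iUnion ?_ fun j => measurableSet_cube _ _).symm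
        exact fun i j hij => hdisj (Subtype.coe_injective.ne hij)
    _ ≤ volume big := measure_mono (iUnion_subset hsub)
    _ = 2 ^ n * volume (dyCube (k j₀) (a j₀)) := by
        rw [hbig, volume_cube, dyCube, volume_cube]
        rw [ENNReal.ofReal_mul (by norm_num), mul_pow]
        norm_num
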